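/- The posterior β parameter in the Normal-inverse-Gamma linear regression update is nonnegative: β_n = β₀ + ½(yᵀy + u₀ᵀV₀⁻¹u₀ − u_nᵀV_n⁻¹u_n) ≥ β₀ > 0, where V_n⁻¹ = XXᵀ + V₀⁻¹ and u_n = V_n(Xy + V₀⁻¹u₀). -/

import Mathlib

/-!
Since `u_n` solves the normal equations `(X Xᵀ + V₀⁻¹) u_n = X y + V₀⁻¹ u₀`, completing the square
gives `yᵀy + u₀ᵀV₀⁻¹u₀ − u_nᵀV_n⁻¹u_n = ‖y − Xᵀu_n‖² + (u_n − u₀)ᵀV₀⁻¹(u_n − u₀)`,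
a sum of two nonnegative terms because `V₀⁻¹` is positive definite.
-/

open Matrix

namespace Matrix

variable {m n R : Type*} [Fintype m] [Fintype n]

theorem dotProduct_self_add_sub_eq_of_mulVec_eq [CommRing R] {X : Matrix m n R}
    {P : Matrix m m R} (hP : P.IsSymm) {y : n → R} {u₀ u : m → R}
    (hu : (X * Xᵀ + P) *ᵥ u = X *ᵥ y + P *ᵥ u₀) :
    y ⬝ᵥ y + u₀ ⬝ᵥ (P *ᵥ u₀) - u ⬝ᵥ ((X * Xᵀ + P) *ᵥ u)
      = (y - Xᵀ *ᵥ u) ⬝ᵥ (y - Xᵀ *ᵥ u) + (u - u₀) ⬝ᵥ (P *ᵥ (u - u₀)) := by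
  have hquad : u ⬝ᵥ ((X * Xᵀ + P) *ᵥ u) = (Xᵀ *ᵥ u) ⬝ᵥ (Xᵀ *ᵥ u) + u ⬝ᵥ (P *ᵥ u) := by
    rw [add_mulVec, dotProduct_add, ← mulVec_mulVec, dotProduct_transpose_mulVec]
  have hlin : u ⬝ᵥ ((X * Xᵀ + P) *ᵥ u) = y ⬝ᵥ (Xᵀ *ᵥ u) + u ⬝ᵥ (P *ᵥ u₀) := by
    rw [hu, dotProduct_add, dotProduct_transpose_mulVec]
  have hP₀ : u₀ ⬝ᵥ (P *ᵥ u) = u ⬝ᵥ (P *ᵥ u₀) := by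
    simpa only [hP.eq] using dotProduct_transpose_mulVec P u₀ u
  simp only [sub_dotProduct, dotProduct_sub, mulVec_sub, dotProduct_comm (Xᵀ *ᵥ u) y]
  linear_combination hquad - 2 * hlin + hP₀

theorem dotProduct_self_add_sub_nonneg_of_mulVec_eq {X : Matrix m n ℝ} {P : Matrix m m ℝ}
    (hP : P.PosSemidef) {y : n → ℝ} {u₀ u : m → ℝ}
    (hu : (X * Xᵀ + P) *ᵥ u = X *ᵥ y + P *ᵥ u₀) :
    0 ≤ y ⬝ᵥ y + u₀ ⬝ᵥ (P *ᵥ u₀) - u ⬝ᵥ ((X * Xᵀ + P) *ᵥ u) := by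
  rw [dotProduct_self_add_sub_eq_of_mulVec_eq (isHermitian_iff_isSymm.mp hP.isHermitian) hu]
  have hres : 0 ≤ (y - Xᵀ *ᵥ u) ⬝ᵥ (y - Xᵀ *ᵥ u) := by
    simpa using dotProduct_self_star_nonneg (y - Xᵀ *ᵥ u)
  have hprior : 0 ≤ (u - u₀) ⬝ᵥ (P *ᵥ (u - u₀)) := by
    simpa using hP.dotProduct_mulVec_nonneg (u - u₀)
  exact add_nonneg hres hprior

end Matrix

theorem stmt_7_general {d n : ℕ} (X : Matrix (Fin d) (Fin n) ℝ) (y : Fin n → ℝ)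
    (V₀ : Matrix (Fin d) (Fin d) ℝ) (hV₀ : V₀.PosDef)
    (u₀ : Fin d → ℝ) (β₀ : ℝ) (hβ₀ : 0 < β₀)
    (Vninv : Matrix (Fin d) (Fin d) ℝ) (hVninv : Vninv = X * Xᵀ + V₀⁻¹)
    (un : Fin d → ℝ) (hun : un = Vninv⁻¹ *ᵥ (X *ᵥ y + V₀⁻¹ *ᵥ u₀))
    (βn : ℝ)
    (hβn : βn = β₀ + (1 / 2) * (y ⬝ᵥ y + u₀ ⬝ᵥ (V₀⁻¹ *ᵥ u₀) - un ⬝ᵥ (Vninv *ᵥ un))) :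
    β₀ ≤ βn ∧ 0 < βn := by
  have hVninv_posDef : Vninv.PosDef := by
    rw [hVninv, ← conjTranspose_eq_transpose_of_trivial]
    exact PosDef.posSemidef_add (posSemidef_self_mul_conjTranspose X) hV₀.inv
  have hnormal : Vninv *ᵥ un = X *ᵥ y + V₀⁻¹ *ᵥ u₀ := by
    have hdet : IsUnit Vninv.det := (isUnit_iff_isUnit_det _).mp hVninv_posDef.isUnit
    rw [hun, mulVec_mulVec, mul_nonsing_inv _ hdet, one_mulVec]
  subst hVninv
  have hgain := dotProduct_self_add_sub_nonneg_of_mulVec_eq hV₀.inv.posSemidef hnormal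
  constructor <;> linarith

/-- The posterior `β` parameter in the Normal-inverse-Gamma linear regression
update is at least the prior `β₀`, hence positive:
`β_n = β₀ + ½(yᵀy + u₀ᵀV₀⁻¹u₀ − u_nᵀV_n⁻¹u_n) ≥ β₀ > 0`. -/
theorem stmt_7 {d n : ℕ} (X : Matrix (Fin d) (Fin n) ℝ) (y : Fin n → ℝ)
    (V₀ : Matrix (Fin d) (Fin d) ℝ) (hV₀sym : V₀.IsSymm) (hV₀ : V₀.PosDef)
    (u₀ : Fin d → ℝ) (β₀ : ℝ) (hβ₀ : 0 < β₀)
    (Vninv : Matrix (Fin d) (Fin d) ℝ) (hVninv : Vninv = X * Xᵀ + V₀⁻¹)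
    (un : Fin d → ℝ) (hun : un = Vninv⁻¹ *ᵥ (X *ᵥ y + V₀⁻¹ *ᵥ u₀))
    (βn : ℝ)
    (hβn : βn = β₀ + (1 / 2) * (y ⬝ᵥ y + u₀ ⬝ᵥ (V₀⁻¹ *ᵥ u₀) - un ⬝ᵥ (Vninv *ᵥ un))) :
    β₀ ≤ βn ∧ 0 < βn :=
  stmt_7_general X y V₀ hV₀ u₀ β₀ hβ₀ Vninv hVninv un hun βn hβn
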